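/- arXiv:1904.08778 — 9 statements merged into one kernel-verified Lean document; each statement's English description precedes it below -/
import Mathlib

section
/- Fix d* > 0. If for every initial state x(0) in R^n there exist a time t_f > 0 and an input u on [0,t_f] such that every component of x(t_f) is at least d*, then for every threshold d >= 0 and every initial state x(0) in R^n there exist a time t_f > 0 and an input u on [0,t_f] such that every component of x(t_f) is at least d. (In a linear system, d-herdability for one positive threshold implies herdability for every nonnegative threshold.) -/
open MeasureTheory

/-- The state of the LTI system `x' = A x + B u` at time `tf`, starting from `x0`
under the input `u`:  `x(tf) = exp(tf A) x0 + ∫_0^tf exp((tf-τ) A) B u(τ) dτ`. -/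
noncomputable def stateAt {n m : ℕ} (A : Matrix (Fin n) (Fin n) ℝ) (B : Matrix (Fin n) (Fin m) ℝ)
    (x0 : Fin n → ℝ) (u : ℝ → Fin m → ℝ) (tf : ℝ) : Fin n → ℝ :=
  (NormedSpace.exp (tf • A)).mulVec x0 +
    ∫ τ in (0:ℝ)..tf, (NormedSpace.exp ((tf - τ) • A) * B).mulVec (u τ)

/-- The input `u` is admissible (integrable) on `[0, tf]`. -/
def ValidInput {n m : ℕ} (A : Matrix (Fin n) (Fin n) ℝ) (B : Matrix (Fin n) (Fin m) ℝ)
    (tf : ℝ) (u : ℝ → Fin m → ℝ) : Prop :=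
  IntervalIntegrable (fun τ => (NormedSpace.exp ((tf - τ) • A) * B).mulVec (u τ)) volume 0 tf

/-- A subset `S` of the states is herdable: from every initial condition and for every
threshold `h ≥ 0` there are a finite time `tf > 0` and an input driving every state in `S`
at least to `h` at time `tf`. -/
def Herdable {n m : ℕ} (A : Matrix (Fin n) (Fin n) ℝ) (B : Matrix (Fin n) (Fin m) ℝ)
    (S : Set (Fin n)) : Prop :=
  ∀ x0 : Fin n → ℝ, ∀ h : ℝ, 0 ≤ h →
    ∃ tf : ℝ, 0 < tf ∧ ∃ u : ℝ → Fin m → ℝ, ValidInput A B tf u ∧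
      ∀ i ∈ S, h ≤ stateAt A B x0 u tf i

/-- The controllability matrix `C = [B, AB, …, A^{n-1} B]`; the column indexed by
`(d, j)` is the `j`-th column of `A^d B`. -/
def ctrb {n m : ℕ} (A : Matrix (Fin n) (Fin n) ℝ) (B : Matrix (Fin n) (Fin m) ℝ) :
    Matrix (Fin n) (Fin n × Fin m) ℝ := fun i p => (A ^ (p.1 : ℕ) * B) i p.2

/-! The state at time `tf` is linear in the pair `(x0, u)`. Scaling the input that herds
`c⁻¹ • x0` past `dstar` by `c = d / dstar + 1` therefore herds `x0` past `c * dstar ≥ d`. -/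

section Scaling

variable {n m : ℕ} {A : Matrix (Fin n) (Fin n) ℝ} {B : Matrix (Fin n) (Fin m) ℝ}

theorem stateAt_smul (c : ℝ) (x0 : Fin n → ℝ) (u : ℝ → Fin m → ℝ) (tf : ℝ) :
    stateAt A B (c • x0) (c • u) tf = c • stateAt A B x0 u tf := by
  simp only [stateAt, Pi.smul_apply, Matrix.mulVec_smul, intervalIntegral.integral_smul,
    smul_add]

theorem ValidInput.smul {tf : ℝ} {u : ℝ → Fin m → ℝ} (hu : ValidInput A B tf u) (c : ℝ) :
    ValidInput A B tf (c • u) := by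
  have hfun : (fun τ => (NormedSpace.exp ((tf - τ) • A) * B).mulVec ((c • u) τ)) =
      c • fun τ => (NormedSpace.exp ((tf - τ) • A) * B).mulVec (u τ) := by
    funext τ
    simp only [Pi.smul_apply, Matrix.mulVec_smul]
  rw [ValidInput, hfun]
  exact IntervalIntegrable.smul hu c

end Scaling

/-- If the system can be driven (from any initial state) so that all components exceed a
fixed positive threshold `dstar`, then for every nonnegative threshold `d` and every
initial state it can be driven so that all components exceed `d`. -/
theorem herdable_of_pos_threshold {n m : ℕ}
    (A : Matrix (Fin n) (Fin n) ℝ) (B : Matrix (Fin n) (Fin m) ℝ)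
    (dstar : ℝ) (hdstar : 0 < dstar)
    (H : ∀ x0 : Fin n → ℝ, ∃ tf : ℝ, 0 < tf ∧ ∃ u : ℝ → Fin m → ℝ,
      ValidInput A B tf u ∧ ∀ i : Fin n, dstar ≤ stateAt A B x0 u tf i) :
    ∀ d : ℝ, 0 ≤ d → ∀ x0 : Fin n → ℝ, ∃ tf : ℝ, 0 < tf ∧ ∃ u : ℝ → Fin m → ℝ,
      ValidInput A B tf u ∧ ∀ i : Fin n, d ≤ stateAt A B x0 u tf i := by
  intro d hd x0
  set c := d / dstar + 1
  have hc : 0 < c := by positivity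
  have hd_le : d ≤ c * dstar := by
    rw [add_mul, div_mul_cancel₀ d hdstar.ne']
    linarith
  obtain ⟨tf, htf, u, hu, hherd⟩ := H (c⁻¹ • x0)
  refine ⟨tf, htf, c • u, hu.smul c, fun i => ?_⟩
  have hx0 : x0 = c • c⁻¹ • x0 := by rw [smul_inv_smul₀ hc.ne']
  rw [hx0, stateAt_smul, Pi.smul_apply, smul_eq_mul]
  exact hd_le.trans (mul_le_mul_of_nonneg_left (hherd i) hc.le)
end

section
/- For every t > 0, a subset S of {1,...,n} of states is herdable if and only if there exists a vector k in range(W_c[0,t]) with k_i > 0 for all i in S; in particular, the system is completely herdable if and only if range(W_c[0,t]) contains an entrywise positive vector. -/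
open MeasureTheory

/-- The controllability Grammian `W_c[0,t] = ∫_0^t exp(Aτ) B Bᵀ exp(Aᵀτ) dτ`,
defined entrywise. -/
noncomputable def gram {n m : ℕ} (A : Matrix (Fin n) (Fin n) ℝ) (B : Matrix (Fin n) (Fin m) ℝ)
    (t : ℝ) : Matrix (Fin n) (Fin n) ℝ := fun i k =>
  ∫ τ in (0:ℝ)..t,
    (NormedSpace.exp (τ • A) * B * B.transpose * NormedSpace.exp (τ • A.transpose)) i k

/-!
The Grammian `W = W_c[0,t]` is symmetric, so its range is the orthogonal complement of its
kernel. If `W z = 0` then `∫₀ᵗ ‖zᵀ e^{τA} B‖² dτ = zᵀ W z = 0`, so the analytic function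
`τ ↦ zᵀ e^{τA} B` vanishes on `(0, t)` and hence on all of `ℝ`. Such a `z` is orthogonal to every
state reachable from `0`, at any time; so a herding input from `x(0) = 0` to the threshold `1`
produces a vector of `range W` that is `≥ 1` on `S`. Conversely, the input
`u(τ) = c Bᵀ e^{(t-τ)Aᵀ} y` steers `x(0)` to `e^{tA} x(0) + c W y` at time `t`, which for large
`c` exceeds any threshold on the coordinates where `W y` is positive.
-/

open NormedSpace Set Filter Topology
open scoped Matrix

namespace Matrix

variable {ι : Type*} [Fintype ι] [DecidableEq ι]

theorem analyticAt_exp_smul_apply (A : Matrix ι ι ℝ) (i k : ι) (x : ℝ) :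
    AnalyticAt ℝ (fun τ : ℝ => exp (τ • A) i k) x := by
  -- Any normed algebra structure inducing the product topology will do.
  let _ : NormedRing (Matrix ι ι ℝ) := Matrix.linftyOpNormedRing
  let _ : NormedAlgebra ℝ (Matrix ι ι ℝ) := Matrix.linftyOpNormedAlgebra
  have hexp : AnalyticAt ℝ (fun τ : ℝ => exp (τ • A)) x :=
    (exp_analytic _).comp (analyticAt_id.smul analyticAt_const)
  exact (LinearMap.toContinuousLinearMap (entryLinearMap ℝ ℝ i k)).analyticAt _ |>.comp hexp

theorem continuous_exp_smul (A : Matrix ι ι ℝ) : Continuous fun τ : ℝ => exp (τ • A) :=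
  continuous_matrix fun i k =>
    continuous_iff_continuousAt.2 fun x => (analyticAt_exp_smul_apply A i k x).continuousAt

theorem IsHermitian.exists_mulVec_eq_of_orthogonal_ker {W : Matrix ι ι ℝ} (hW : W.IsHermitian)
    {r : ι → ℝ} (hr : ∀ z, W *ᵥ z = 0 → z ⬝ᵥ r = 0) : ∃ y, W *ᵥ y = r := by
  have hsymm := isSymmetric_toEuclideanLin_iff.mpr hW
  have hmem : WithLp.toLp 2 r ∈ LinearMap.range W.toEuclideanLin := by
    rw [← Submodule.orthogonal_orthogonal (LinearMap.range _), hsymm.orthogonal_range,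
      Submodule.mem_orthogonal]
    intro z hz
    have hWz : W *ᵥ z.ofLp = 0 := congrArg WithLp.ofLp hz
    simpa [EuclideanSpace.inner_eq_star_dotProduct, dotProduct_comm] using hr z hWz
  obtain ⟨y, hy⟩ := hmem
  exact ⟨y, congrArg WithLp.ofLp hy⟩

end Matrix

section IntervalIntegral

open Matrix

variable {ι κ : Type*} [Fintype ι] [Fintype κ] {a b : ℝ}

theorem Continuous.eqOn_zero_of_intervalIntegral_eq_zero {f : ℝ → ℝ} (hf : Continuous f)
    (hab : a ≤ b) (hf₀ : ∀ x, 0 ≤ f x) (hint : ∫ x in a..b, f x = 0) : EqOn f 0 (Ioo a b) := by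
  have hae := (intervalIntegral.integral_eq_zero_iff_of_le_of_nonneg_ae hab
    (Eventually.of_forall hf₀) (hf.intervalIntegrable a b)).1 hint
  exact Measure.eqOn_open_of_ae_eq (ae_restrict_of_ae_restrict_of_subset Ioo_subset_Ioc_self hae)
    isOpen_Ioo hf.continuousOn continuousOn_const

theorem dotProduct_intervalIntegral (z : ι → ℝ) {f : ℝ → ι → ℝ}
    (hf : IntervalIntegrable f volume a b) :
    z ⬝ᵥ ∫ τ in a..b, f τ = ∫ τ in a..b, z ⬝ᵥ f τ :=
  ((dotProductBilin ℝ ℝ z).toContinuousLinearMap.intervalIntegral_comp_comm hf).symm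

theorem intervalIntegral_apply {f : ℝ → ι → ℝ} (hf : IntervalIntegrable f volume a b) (i : ι) :
    (∫ τ in a..b, f τ) i = ∫ τ in a..b, f τ i :=
  ((ContinuousLinearMap.proj (R := ℝ) i).intervalIntegral_comp_comm hf).symm

theorem intervalIntegral_mulVec {w : ℝ → Matrix ι κ ℝ} (hw : Continuous w) (y : κ → ℝ) :
    ∫ τ in a..b, w τ *ᵥ y = (of fun i k => ∫ τ in a..b, w τ i k) *ᵥ y := by
  ext i
  rw [intervalIntegral_apply ((hw.matrix_mulVec continuous_const).intervalIntegrable a b)]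
  simp only [mulVec, dotProduct, of_apply]
  rw [intervalIntegral.integral_finsetSum (f := fun k τ => w τ i k * y k) fun k _ =>
    ((hw.matrix_elem i k).mul continuous_const).intervalIntegrable a b]
  simp only [intervalIntegral.integral_mul_const]

end IntervalIntegral

section ImpulseResponse

open Matrix

variable {ι κ : Type*} [Fintype ι] [DecidableEq ι]

noncomputable def impulseResponse (A : Matrix ι ι ℝ) (B : Matrix ι κ ℝ) (τ : ℝ) :
    Matrix ι κ ℝ :=
  exp (τ • A) * B

variable (A : Matrix ι ι ℝ) (B : Matrix ι κ ℝ)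

theorem continuous_impulseResponse : Continuous (impulseResponse A B) :=
  (continuous_exp_smul A).matrix_mul continuous_const

theorem analyticAt_vecMul_impulseResponse [Fintype κ] (z : ι → ℝ) (x : ℝ) :
    AnalyticAt ℝ (fun τ => z ᵥ* impulseResponse A B τ) x := by
  refine analyticAt_pi_iff.2 fun j => ?_
  simp only [impulseResponse, vecMul, dotProduct, mul_apply]
  have := analyticAt_exp_smul_apply A
  fun_prop

theorem vecMul_impulseResponse_eq_zero_of_eqOn [Fintype κ] {a b : ℝ} (hab : a < b)
    {z : ι → ℝ} (hz : EqOn (fun τ => z ᵥ* impulseResponse A B τ) 0 (Ioo a b)) (s : ℝ) :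
    z ᵥ* impulseResponse A B s = 0 := by
  have hev : (fun τ => z ᵥ* impulseResponse A B τ) =ᶠ[𝓝 ((a + b) / 2)] 0 :=
    eventuallyEq_of_mem (Ioo_mem_nhds (by linarith) (by linarith)) hz
  exact AnalyticOnNhd.eqOn_zero_of_preconnected_of_eventuallyEq_zero
    (fun x _ => analyticAt_vecMul_impulseResponse A B z x) isPreconnected_univ (mem_univ _) hev
    (mem_univ s)

end ImpulseResponse

section Grammian

open Matrix (of of_apply transpose_apply transpose_mul transpose_transpose transpose_smul
  exp_transpose conjTranspose_apply mulVec_mulVec mulVec_transpose dotProduct_mulVec)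

variable {n m : ℕ} (A : Matrix (Fin n) (Fin n) ℝ) (B : Matrix (Fin n) (Fin m) ℝ)

theorem gram_eq (t : ℝ) :
    gram A B t = of fun i k =>
      ∫ τ in (0 : ℝ)..t, (impulseResponse A B τ * (impulseResponse A B τ)ᵀ) i k := by
  ext i k
  simp only [gram, of_apply, impulseResponse, transpose_mul, ← transpose_smul, exp_transpose,
    Matrix.mul_assoc]

theorem gram_isHermitian (t : ℝ) : (gram A B t).IsHermitian := by
  ext i k
  simp only [conjTranspose_apply, star_trivial, gram_eq, of_apply]
  congr 1 with τ
  rw [← transpose_apply (impulseResponse A B τ * _), transpose_mul, transpose_transpose]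

theorem gram_mulVec (t : ℝ) (y : Fin n → ℝ) :
    gram A B t *ᵥ y =
      ∫ τ in (0 : ℝ)..t, impulseResponse A B τ *ᵥ (y ᵥ* impulseResponse A B τ) := by
  have hR := continuous_impulseResponse A B
  rw [gram_eq, ← intervalIntegral_mulVec (hR.matrix_mul hR.matrix_transpose)]
  simp only [← mulVec_mulVec, mulVec_transpose]

theorem dotProduct_gram_mulVec (t : ℝ) (z y : Fin n → ℝ) :
    z ⬝ᵥ gram A B t *ᵥ y =
      ∫ τ in (0 : ℝ)..t, (z ᵥ* impulseResponse A B τ) ⬝ᵥ (y ᵥ* impulseResponse A B τ) := by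
  have hR := continuous_impulseResponse A B
  rw [gram_mulVec, dotProduct_intervalIntegral _
    ((hR.matrix_mulVec (continuous_const.matrix_vecMul hR)).intervalIntegrable _ _)]
  simp only [dotProduct_mulVec]

theorem vecMul_impulseResponse_eq_zero_of_gram_mulVec_eq_zero {t : ℝ} (ht : 0 < t)
    {z : Fin n → ℝ} (hz : gram A B t *ᵥ z = 0) (s : ℝ) : z ᵥ* impulseResponse A B s = 0 := by
  have hzR := (continuous_const (y := z)).matrix_vecMul (continuous_impulseResponse A B)
  have hint : ∫ τ in (0 : ℝ)..t,
      (z ᵥ* impulseResponse A B τ) ⬝ᵥ (z ᵥ* impulseResponse A B τ) = 0 := by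
    rw [← dotProduct_gram_mulVec, hz, dotProduct_zero]
  have hsq := (hzR.dotProduct hzR).eqOn_zero_of_intervalIntegral_eq_zero ht.le
    (fun _ => Fintype.sum_nonneg fun _ => mul_self_nonneg _) hint
  exact vecMul_impulseResponse_eq_zero_of_eqOn A B ht
    (fun τ hτ => dotProduct_self_eq_zero.1 (hsq hτ)) s

end Grammian

section Herdability

open Matrix (mulVec_zero mulVec_smul dotProduct_mulVec)

variable {n m : ℕ} (A : Matrix (Fin n) (Fin n) ℝ) (B : Matrix (Fin n) (Fin m) ℝ)

theorem stateAt_eq (x0 : Fin n → ℝ) (u : ℝ → Fin m → ℝ) (tf : ℝ) :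
    stateAt A B x0 u tf =
      exp (tf • A) *ᵥ x0 + ∫ τ in (0 : ℝ)..tf, impulseResponse A B (tf - τ) *ᵥ u τ :=
  rfl

theorem exists_gram_mulVec_eq_stateAt_zero {t tf : ℝ} (ht : 0 < t) {u : ℝ → Fin m → ℝ}
    (hu : ValidInput A B tf u) : ∃ y, gram A B t *ᵥ y = stateAt A B 0 u tf := by
  refine (gram_isHermitian A B t).exists_mulVec_eq_of_orthogonal_ker fun z hz => ?_
  have hzR := vecMul_impulseResponse_eq_zero_of_gram_mulVec_eq_zero A B ht hz
  rw [stateAt_eq, mulVec_zero, zero_add,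
    dotProduct_intervalIntegral z (f := fun τ => impulseResponse A B (tf - τ) *ᵥ u τ) hu]
  simp only [dotProduct_mulVec, hzR, zero_dotProduct, intervalIntegral.integral_zero]

noncomputable def steeringInput (t : ℝ) (y : Fin n → ℝ) (τ : ℝ) : Fin m → ℝ :=
  y ᵥ* impulseResponse A B (t - τ)

theorem validInput_smul_steeringInput (t c : ℝ) (y : Fin n → ℝ) :
    ValidInput A B t (c • steeringInput A B t y) := by
  have hR : Continuous fun τ => impulseResponse A B (t - τ) :=
    (continuous_impulseResponse A B).comp (continuous_sub_left t)
  exact (hR.matrix_mulVec ((continuous_const.matrix_vecMul hR).const_smul c)).intervalIntegrable 0 t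

theorem stateAt_smul_steeringInput (x0 y : Fin n → ℝ) (t c : ℝ) :
    stateAt A B x0 (c • steeringInput A B t y) t = exp (t • A) *ᵥ x0 + c • gram A B t *ᵥ y := by
  simp only [stateAt_eq, steeringInput, Pi.smul_apply, mulVec_smul,
    intervalIntegral.integral_smul, sub_self, sub_zero, gram_mulVec,
    intervalIntegral.integral_comp_sub_left
      (fun σ => impulseResponse A B σ *ᵥ (y ᵥ* impulseResponse A B σ))]

theorem herdable_of_forall_gram_mulVec_pos {t : ℝ} (ht : 0 < t) {S : Set (Fin n)}
    {y : Fin n → ℝ} (hy : ∀ i ∈ S, 0 < (gram A B t *ᵥ y) i) : Herdable A B S := by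
  intro x0 h _
  set a := exp (t • A) *ᵥ x0
  obtain ⟨c, hc⟩ := Finset.exists_le (Finset.univ.image fun i => (h - a i) / (gram A B t *ᵥ y) i)
  refine ⟨t, ht, _, validInput_smul_steeringInput A B t c y, fun i hi => ?_⟩
  have hci := (div_le_iff₀ (hy i hi)).1 (hc _ (Finset.mem_image_of_mem _ (Finset.mem_univ i)))
  rw [stateAt_smul_steeringInput, Pi.add_apply, Pi.smul_apply, smul_eq_mul]
  linarith

end Herdability

/-- For every `t > 0`: a subset `S` of states is herdable iff the range of the
controllability Grammian `W_c[0,t]` contains a vector positive on `S`; in particular the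
system is completely herdable iff that range contains an entrywise positive vector. -/
theorem herdable_iff_range_gram {n m : ℕ}
    (A : Matrix (Fin n) (Fin n) ℝ) (B : Matrix (Fin n) (Fin m) ℝ) :
    ∀ t : ℝ, 0 < t →
      (∀ S : Set (Fin n),
        Herdable A B S ↔
          ∃ k : Fin n → ℝ, (∃ y : Fin n → ℝ, (gram A B t).mulVec y = k) ∧
            ∀ i ∈ S, 0 < k i) ∧
      (Herdable A B Set.univ ↔
        ∃ k : Fin n → ℝ, (∃ y : Fin n → ℝ, (gram A B t).mulVec y = k) ∧
          ∀ i : Fin n, 0 < k i) := by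
  intro t ht
  have herdable_iff : ∀ S : Set (Fin n), Herdable A B S ↔
      ∃ k : Fin n → ℝ, (∃ y : Fin n → ℝ, (gram A B t).mulVec y = k) ∧ ∀ i ∈ S, 0 < k i := by
    refine fun S => ⟨fun hS => ?_, fun ⟨k, ⟨y, hyk⟩, hk⟩ =>
      herdable_of_forall_gram_mulVec_pos A B ht (hyk ▸ hk)⟩
    obtain ⟨tf, -, u, hu, hreach⟩ := hS 0 1 zero_le_one
    exact ⟨_, exists_gram_mulVec_eq_stateAt_zero A B ht hu,
      fun i hi => one_pos.trans_le (hreach i hi)⟩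
  exact ⟨herdable_iff, (herdable_iff Set.univ).trans (by simp)⟩
end

section
/- If the linear system is completely herdable, then there exists an entrywise positive vector k in the range of the n x (n+m) matrix [A B] obtained by concatenating A and B. -/
open MeasureTheory

/-!
Started at `x(0) = 0`, the state `x(t_f) = ∫ exp((t_f - τ) A) B u(τ) dτ` lies in every subspace `S`
that contains the range of `B` and is invariant under `A`: the matrices leaving `S` invariant form
a closed subalgebra, so it contains `exp((t_f - τ) A)`, and an integral of `S`-valued functions
stays in `S`. The range of `[A B]` is such a subspace, and herding the system from `0` above the
threshold `1` produces an entrywise positive vector in it.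
-/

namespace Matrix

variable {ι : Type*} [Fintype ι] [DecidableEq ι]

def invtSubalgebra (S : Submodule ℝ (ι → ℝ)) : Subalgebra ℝ (Matrix ι ι ℝ) where
  carrier := {M | ∀ v ∈ S, M *ᵥ v ∈ S}
  mul_mem' hM hN v hv := by rw [← mulVec_mulVec]; exact hM _ (hN v hv)
  add_mem' hM hN v hv := by rw [add_mulVec]; exact S.add_mem (hM v hv) (hN v hv)
  algebraMap_mem' c v hv := by
    rw [Algebra.algebraMap_eq_smul_one, smul_mulVec, one_mulVec]
    exact S.smul_mem c hv

theorem isClosed_invtSubalgebra (S : Submodule ℝ (ι → ℝ)) :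
    IsClosed (invtSubalgebra S : Set (Matrix ι ι ℝ)) := by
  have hS : IsClosed (S : Set (ι → ℝ)) := S.closed_of_finiteDimensional
  simp only [invtSubalgebra, Subalgebra.coe_mk, Set.ofPred_forall]
  exact isClosed_biInter fun v _ => hS.preimage (continuous_id.matrix_mulVec continuous_const)

theorem exp_mulVec_mem {S : Submodule ℝ (ι → ℝ)} {A : Matrix ι ι ℝ}
    (hA : ∀ v ∈ S, A *ᵥ v ∈ S) {v : ι → ℝ} (hv : v ∈ S) : NormedSpace.exp A *ᵥ v ∈ S :=
  NormedSpace.exp_mem (R := ℝ) (isClosed_invtSubalgebra S) hA v hv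

end Matrix

theorem Submodule.integral_mem {X E : Type*} [MeasurableSpace X] {μ : Measure X}
    [NormedAddCommGroup E] [NormedSpace ℝ E] [CompleteSpace E] {S : Submodule ℝ E}
    (hS : S.ClosedComplemented) {f : X → E} (hf : ∀ x, f x ∈ S) : ∫ x, f x ∂μ ∈ S := by
  by_cases hfi : Integrable f μ
  · obtain ⟨P, hP⟩ := hS
    have hPf : ∀ x, (S.subtypeL ∘L P) (f x) = f x := fun x =>
      congrArg Subtype.val (hP ⟨f x, hf x⟩)
    rw [← integral_congr_ae (Filter.Eventually.of_forall hPf),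
      (S.subtypeL.comp P).integral_comp_comm hfi]
    exact (P _).2
  · rw [integral_undef hfi]
    exact S.zero_mem

theorem Submodule.intervalIntegral_mem {E : Type*} [NormedAddCommGroup E] [NormedSpace ℝ E]
    [CompleteSpace E] {S : Submodule ℝ E} (hS : S.ClosedComplemented) {f : ℝ → E}
    (hf : ∀ x, f x ∈ S) (a b : ℝ) (μ : Measure ℝ) : ∫ x in a..b, f x ∂μ ∈ S :=
  S.sub_mem (S.integral_mem hS hf) (S.integral_mem hS hf)

open Matrix in
theorem stateAt_zero_mem {n m : ℕ} {A : Matrix (Fin n) (Fin n) ℝ} {B : Matrix (Fin n) (Fin m) ℝ}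
    {S : Submodule ℝ (Fin n → ℝ)} (hA : ∀ v ∈ S, A *ᵥ v ∈ S) (hB : ∀ w, B *ᵥ w ∈ S)
    (u : ℝ → Fin m → ℝ) (tf : ℝ) : stateAt A B 0 u tf ∈ S := by
  rw [stateAt, mulVec_zero, zero_add]
  refine S.intervalIntegral_mem (.of_finiteDimensional S) (fun τ => ?_) _ _ _
  rw [← mulVec_mulVec]
  refine exp_mulVec_mem (fun v hv => ?_) (hB _)
  rw [smul_mulVec]
  exact S.smul_mem _ (hA v hv)

namespace Matrix

variable {R ι κ₁ κ₂ : Type*} [CommSemiring R] [Fintype κ₁] [Fintype κ₂]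

theorem mulVec_mem_range_fromCols_left (A : Matrix ι κ₁ R) (B : Matrix ι κ₂ R) (v : κ₁ → R) :
    A *ᵥ v ∈ LinearMap.range (fromCols A B).mulVecLin :=
  ⟨Sum.elim v 0, by simp⟩

theorem mulVec_mem_range_fromCols_right (A : Matrix ι κ₁ R) (B : Matrix ι κ₂ R) (w : κ₂ → R) :
    B *ᵥ w ∈ LinearMap.range (fromCols A B).mulVecLin :=
  ⟨Sum.elim 0 w, by simp⟩

end Matrix

/-- If the system is completely herdable, then the range of the `n × (n+m)` matrix
`[A B]` contains an entrywise positive vector. -/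
theorem range_AB_pos_of_completelyHerdable {n m : ℕ}
    (A : Matrix (Fin n) (Fin n) ℝ) (B : Matrix (Fin n) (Fin m) ℝ)
    (H : Herdable A B Set.univ) :
    ∃ k : Fin n → ℝ, (∃ y : Fin n ⊕ Fin m → ℝ, (Matrix.fromCols A B).mulVec y = k) ∧
      ∀ i : Fin n, 0 < k i := by
  obtain ⟨tf, -, u, -, hx⟩ := H 0 1 zero_le_one
  refine ⟨stateAt A B 0 u tf, ?_, fun i => one_pos.trans_le (hx i trivial)⟩
  exact stateAt_zero_mem (fun v _ => Matrix.mulVec_mem_range_fromCols_left A B v)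
    (Matrix.mulVec_mem_range_fromCols_right A B) u tf
end

section
/- Let l be a state and suppose there exists a column index c with C_{l,c} nonzero such that every state z whose entry C_{z,c} is nonzero and has sign opposite to that of C_{l,c} is strictly herdable. Then l is strictly herdable. -/
/-- A vector is unisigned if all of its nonzero entries have the same sign. -/
def Unisigned {n : ℕ} (k : Fin n → ℝ) : Prop :=
  ∀ a b : Fin n, k a ≠ 0 → k b ≠ 0 → Real.sign (k a) = Real.sign (k b)

/-- State `i` is strictly herdable: there is a unisigned vector `k` in the range of the
controllability matrix with `k i ≠ 0`. -/
def StrictlyHerdable {n m : ℕ} (A : Matrix (Fin n) (Fin n) ℝ)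
    (B : Matrix (Fin n) (Fin m) ℝ) (i : Fin n) : Prop :=
  ∃ k : Fin n → ℝ, (∃ y : Fin n × Fin m → ℝ, (ctrb A B).mulVec y = k) ∧
    Unisigned k ∧ k i ≠ 0

lemma sign_mul_self_eq_abs (x : ℝ) : Real.sign x * x = |x| := by
  rcases lt_trichotomy x 0 with h | h | h
  · rw [Real.sign_of_neg h, abs_of_neg h]; ring
  · simp [h]
  · rw [Real.sign_of_pos h, abs_of_pos h]; ring

/-- If there is a column `c` with `C l c ≠ 0` such that every state balancing `l` at `c`
(i.e. with a nonzero entry of opposite sign in column `c`) is strictly herdable, then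
`l` is strictly herdable. -/
theorem strictlyHerdable_of_balanced_by_strictlyHerdable {n m : ℕ}
    (A : Matrix (Fin n) (Fin n) ℝ) (B : Matrix (Fin n) (Fin m) ℝ) (l : Fin n)
    (h : ∃ c : Fin n × Fin m, ctrb A B l c ≠ 0 ∧
      ∀ z : Fin n, ctrb A B z c ≠ 0 →
        Real.sign (ctrb A B z c) = - Real.sign (ctrb A B l c) →
        StrictlyHerdable A B z) :
    StrictlyHerdable A B l := by
  classical
  obtain ⟨c, hc, hbal⟩ := h
  set C := ctrb A B with hCdef
  set s : ℝ := Real.sign (C l c) with hs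
  have hs1 : s = 1 ∨ s = -1 := by
    rcases lt_trichotomy (C l c) 0 with h0 | h0 | h0
    · right; rw [hs, Real.sign_of_neg h0]
    · exact absurd h0 hc
    · left; rw [hs, Real.sign_of_pos h0]
  set v : Fin n → ℝ := fun z => s * C z c with hv
  have hvl : 0 < v l := by
    have : v l = |C l c| := sign_mul_self_eq_abs (C l c)
    rw [this]
    exact abs_pos.mpr hc
  have key : ∀ z, v z < 0 → ∃ ky : (Fin n → ℝ) × (Fin n × Fin m → ℝ),
      C.mulVec ky.2 = ky.1 ∧ (∀ a, 0 ≤ ky.1 a) ∧ 0 < ky.1 z := by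
    intro z hz
    have hzc : C z c ≠ 0 := by
      intro h0
      rw [hv] at hz
      simp only [h0, mul_zero] at hz
      exact lt_irrefl 0 hz
    have hz' : s * C z c < 0 := hz
    have hsign : Real.sign (C z c) = - s := by
      rcases hs1 with h1 | h1
      · have hneg : C z c < 0 := by rw [h1] at hz'; linarith
        rw [Real.sign_of_neg hneg, h1]
      · have hpos : 0 < C z c := by rw [h1] at hz'; linarith
        rw [Real.sign_of_pos hpos, h1]; ring
    obtain ⟨k, ⟨y, hy⟩, huni, hkz⟩ := hbal z hzc hsign
    set σ := Real.sign (k z) with hσ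
    refine ⟨⟨σ • k, σ • y⟩, ?_, ?_, ?_⟩
    · show C.mulVec (σ • y) = σ • k
      rw [hCdef, Matrix.mulVec_smul, hy]
    · intro a
      show 0 ≤ (σ • k) a
      simp only [Pi.smul_apply, smul_eq_mul]
      by_cases ha : k a = 0
      · simp [ha]
      · have h2 : σ = Real.sign (k a) := huni z a hkz ha
        rw [h2, sign_mul_self_eq_abs]
        exact abs_nonneg _
    · show 0 < (σ • k) z
      simp only [Pi.smul_apply, smul_eq_mul]
      have h2 : σ * k z = |k z| := sign_mul_self_eq_abs (k z)
      rw [h2]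
      exact abs_pos.mpr hkz
  have keytot : ∀ z : Fin n, ∃ ky : (Fin n → ℝ) × (Fin n × Fin m → ℝ),
      C.mulVec ky.2 = ky.1 ∧ (∀ a, 0 ≤ ky.1 a) ∧ (v z < 0 → 0 < ky.1 z) := by
    intro z
    by_cases hz : v z < 0
    · obtain ⟨ky, h1, h2, h3⟩ := key z hz
      exact ⟨ky, h1, h2, fun _ => h3⟩
    · exact ⟨⟨0, 0⟩, by simp, fun a => le_rfl, fun hcon => absurd hcon hz⟩
  choose F hF1 hF2 hF3 using keytot
  set t : Fin n → ℝ := fun z => if v z < 0 then (-v z) / (F z).1 z else 0 with ht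
  have ht0 : ∀ z, 0 ≤ t z := by
    intro z
    rw [ht]
    by_cases hz : v z < 0
    · simp only [hz, if_true]
      exact div_nonneg (by linarith) (le_of_lt (hF3 z hz))
    · simp [hz]
  have hteq : ∀ z, v z < 0 → t z * (F z).1 z = - v z := by
    intro z hz
    rw [ht]
    simp only [hz, if_true]
    exact div_mul_cancel₀ _ (ne_of_gt (hF3 z hz))
  set w : Fin n → ℝ := fun a => v a + ∑ z, t z * (F z).1 a with hw
  have hsumnn : ∀ a, 0 ≤ ∑ z, t z * (F z).1 a := fun a =>
    Finset.sum_nonneg fun z _ => mul_nonneg (ht0 z) (hF2 z a)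
  have hwnn : ∀ a, 0 ≤ w a := by
    intro a
    rw [hw]
    by_cases ha : v a < 0
    · have h1 : t a * (F a).1 a ≤ ∑ z, t z * (F z).1 a :=
        Finset.single_le_sum (fun z _ => mul_nonneg (ht0 z) (hF2 z a)) (Finset.mem_univ a)
      have h2 := hteq a ha
      simp only
      linarith
    · push_neg at ha
      have := hsumnn a
      simp only
      linarith
  have hwl : 0 < w l := by
    have := hsumnn l
    rw [hw]; simp only; linarith
  set Y : Fin n × Fin m → ℝ := (fun p => if p = c then s else 0) + ∑ z, t z • (F z).2 with hY
  have h0 : C.mulVec (fun p => if p = c then s else 0) = v := by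
    funext a
    simp only [Matrix.mulVec, dotProduct, mul_ite, mul_zero, Finset.sum_ite_eq',
      Finset.mem_univ, if_true]
    exact mul_comm _ _
  have hmul : C.mulVec Y = w := by
    have hlin : C.mulVec Y = C.mulVec (fun p => if p = c then s else 0)
        + ∑ z, t z • C.mulVec ((F z).2) := by
      show C.mulVecLin Y = _
      rw [hY, map_add, map_sum]
      simp only [Matrix.mulVecLin_apply, map_smul]
    rw [hlin, h0]
    funext a
    rw [hw]
    simp only [Pi.add_apply, Finset.sum_apply, Pi.smul_apply, smul_eq_mul]
    congr 1
    apply Finset.sum_congr rfl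
    intro z _
    rw [hF1 z]
  refine ⟨w, ⟨Y, hmul⟩, ?_, ne_of_gt hwl⟩
  intro a b ha hb
  have hpa : 0 < w a := lt_of_le_of_ne (hwnn a) (Ne.symm ha)
  have hpb : 0 < w b := lt_of_le_of_ne (hwnn b) (Ne.symm hb)
  rw [Real.sign_of_pos hpa, Real.sign_of_pos hpb]
end

section
/- Fix d >= 1, an input j and a state i, and let rho_{j->i,d} denote the sum of the weights of all walks of length d from input j to state i (defined as 0 if no such walk exists). If i is in P_d^j and i is not in N_d^j, then rho_{j->i,d} > 0. If i is in N_d^j and i is not in P_d^j, then rho_{j->i,d} < 0. Moreover, if i is in the union of N_d^j and P_d^j but not in their intersection, then rho_{j->i,d} is nonzero. -/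
/-- `k` is a walk of length `e + 1` from input `j` to state `i`: it visits the states
`k 0, k 1, …, k e`, ends at `i`, starts along a nonzero entry of `B`, and follows
nonzero entries of `A`. -/
def IsWalk {n m : ℕ} (A : Matrix (Fin n) (Fin n) ℝ) (B : Matrix (Fin n) (Fin m) ℝ)
    (j : Fin m) (i : Fin n) {e : ℕ} (k : Fin (e + 1) → Fin n) : Prop :=
  k (Fin.last e) = i ∧ B (k 0) j ≠ 0 ∧ ∀ t : Fin e, A (k t.succ) (k t.castSucc) ≠ 0

/-- The weight of the walk `k 0, …, k e` from input `j`: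
`B (k 0) j * ∏ₜ A (k (t+1)) (k t)`. -/
def walkWeight {n m : ℕ} (A : Matrix (Fin n) (Fin n) ℝ) (B : Matrix (Fin n) (Fin m) ℝ)
    (j : Fin m) {e : ℕ} (k : Fin (e + 1) → Fin n) : ℝ :=
  B (k 0) j * ∏ t : Fin e, A (k t.succ) (k t.castSucc)

open Classical in
/-- `rho A B j i d` is the sum of the weights of all walks of length `d` from input `j`
to state `i` (zero if there are none, in particular for `d = 0`). -/
noncomputable def rho {n m : ℕ} (A : Matrix (Fin n) (Fin n) ℝ) (B : Matrix (Fin n) (Fin m) ℝ)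
    (j : Fin m) (i : Fin n) : ℕ → ℝ
  | 0 => 0
  | e + 1 => ∑ k : Fin (e + 1) → Fin n,
      if IsWalk A B j i k then walkWeight A B j k else 0

/-- `Pset A B j d` is the set of states reachable from input `j` by at least one walk of
length `d` of positive weight. -/
def Pset {n m : ℕ} (A : Matrix (Fin n) (Fin n) ℝ) (B : Matrix (Fin n) (Fin m) ℝ)
    (j : Fin m) : ℕ → Set (Fin n)
  | 0 => ∅
  | e + 1 => {i | ∃ k : Fin (e + 1) → Fin n, IsWalk A B j i k ∧ 0 < walkWeight A B j k}

/-- `Nset A B j d` is the set of states reachable from input `j` by at least one walk of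
length `d` of negative weight. -/
def Nset {n m : ℕ} (A : Matrix (Fin n) (Fin n) ℝ) (B : Matrix (Fin n) (Fin m) ℝ)
    (j : Fin m) : ℕ → Set (Fin n)
  | 0 => ∅
  | e + 1 => {i | ∃ k : Fin (e + 1) → Fin n, IsWalk A B j i k ∧ walkWeight A B j k < 0}

lemma walkWeight_ne_zero {n m : ℕ} {A : Matrix (Fin n) (Fin n) ℝ}
    {B : Matrix (Fin n) (Fin m) ℝ} {j : Fin m} {i : Fin n} {e : ℕ}
    {k : Fin (e + 1) → Fin n} (h : IsWalk A B j i k) : walkWeight A B j k ≠ 0 := by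
  obtain ⟨-, hB, hA⟩ := h
  exact mul_ne_zero hB (Finset.prod_ne_zero_iff.2 fun t _ => hA t)

/-- If `i ∈ P_d^j \ N_d^j` then `ρ_{j→i,d} > 0`; if `i ∈ N_d^j \ P_d^j` then
`ρ_{j→i,d} < 0`; and if `i` is in the union but not the intersection of `N_d^j` and
`P_d^j` then `ρ_{j→i,d} ≠ 0`. -/
theorem rho_sign_of_Pset_Nset {n m : ℕ}
    (A : Matrix (Fin n) (Fin n) ℝ) (B : Matrix (Fin n) (Fin m) ℝ) :
    ∀ d : ℕ, 1 ≤ d → ∀ (i : Fin n) (j : Fin m),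
      (i ∈ Pset A B j d → i ∉ Nset A B j d → 0 < rho A B j i d) ∧
      (i ∈ Nset A B j d → i ∉ Pset A B j d → rho A B j i d < 0) ∧
      (i ∈ Nset A B j d ∪ Pset A B j d → i ∉ Nset A B j d ∩ Pset A B j d →
        rho A B j i d ≠ 0) := by
  intro d hd i j
  obtain ⟨e, rfl⟩ : ∃ e, d = e + 1 := ⟨d - 1, (Nat.succ_pred_eq_of_pos hd).symm⟩
  classical
  have hpos : i ∈ Pset A B j (e + 1) → i ∉ Nset A B j (e + 1) → 0 < rho A B j i (e + 1) := by
    rintro ⟨k₀, hk₀, hw₀⟩ hN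
    have key : ∀ k : Fin (e + 1) → Fin n, IsWalk A B j i k → 0 < walkWeight A B j k := by
      intro k hk
      rcases lt_trichotomy (walkWeight A B j k) 0 with h | h | h
      · exact absurd ⟨k, hk, h⟩ hN
      · exact absurd h (walkWeight_ne_zero hk)
      · exact h
    show 0 < ∑ k : Fin (e + 1) → Fin n, if IsWalk A B j i k then walkWeight A B j k else 0
    refine Finset.sum_pos' (fun k _ => ?_) ⟨k₀, Finset.mem_univ _, ?_⟩
    · split
      · exact (key _ ‹_›).le
      · exact le_rfl
    · simpa [hk₀] using key k₀ hk₀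
  have hneg : i ∈ Nset A B j (e + 1) → i ∉ Pset A B j (e + 1) → rho A B j i (e + 1) < 0 := by
    rintro ⟨k₀, hk₀, hw₀⟩ hP
    have key : ∀ k : Fin (e + 1) → Fin n, IsWalk A B j i k → walkWeight A B j k < 0 := by
      intro k hk
      rcases lt_trichotomy (walkWeight A B j k) 0 with h | h | h
      · exact h
      · exact absurd h (walkWeight_ne_zero hk)
      · exact absurd ⟨k, hk, h⟩ hP
    show (∑ k : Fin (e + 1) → Fin n, if IsWalk A B j i k then walkWeight A B j k else 0) < 0
    refine Finset.sum_neg' (fun k _ => ?_) ⟨k₀, Finset.mem_univ _, ?_⟩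
    · split
      · exact (key _ ‹_›).le
      · exact le_rfl
    · simpa [hk₀] using key k₀ hk₀
  refine ⟨hpos, hneg, ?_⟩
  rintro (hN | hP) hNP
  · have hP : i ∉ Pset A B j (e + 1) := fun h => hNP ⟨hN, h⟩
    exact (hneg hN hP).ne
  · have hN : i ∉ Nset A B j (e + 1) := fun h => hNP ⟨h, hP⟩
    exact (hpos hP hN).ne'
end

section
/- If the signed graph of the system is structurally balanced, i.e., every semi-cycle has positive sign, then the controllability matrix is sign definite: for every pair (A',B') with the same sign pattern as (A,B) and for all i in {1,...,n}, d in {1,...,n}, j in {1,...,m}, sgn((A'^{d-1} B')_{i,j}) = sgn((A^{d-1} B)_{i,j}). -/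
/-- `(A', B')` has the same sign pattern as `(A, B)`. -/
def SamePattern {n m : ℕ} (A A' : Matrix (Fin n) (Fin n) ℝ)
    (B B' : Matrix (Fin n) (Fin m) ℝ) : Prop :=
  (∀ p q, Real.sign (A' p q) = Real.sign (A p q)) ∧
    (∀ p q, Real.sign (B' p q) = Real.sign (B p q))

/-- The directed edges of the signed graph of the system: `x_p → x_q` when `A q p ≠ 0`
and `u_j → x_q` when `B q j ≠ 0`. -/
def EdgeExists {n m : ℕ} (A : Matrix (Fin n) (Fin n) ℝ) (B : Matrix (Fin n) (Fin m) ℝ) :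
    (Fin n ⊕ Fin m) → (Fin n ⊕ Fin m) → Prop
  | Sum.inl p, Sum.inl q => A q p ≠ 0
  | Sum.inr j, Sum.inl q => B q j ≠ 0
  | _, _ => False

/-- The sign of an edge of the signed graph of the system. -/
noncomputable def edgeSign {n m : ℕ} (A : Matrix (Fin n) (Fin n) ℝ)
    (B : Matrix (Fin n) (Fin m) ℝ) :
    (Fin n ⊕ Fin m) → (Fin n ⊕ Fin m) → ℝ
  | Sum.inl p, Sum.inl q => Real.sign (A q p)
  | Sum.inr j, Sum.inl q => Real.sign (B q j)
  | _, _ => 0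

/-- The signed graph of the system is structurally balanced: every semi-cycle (a closed
vertex sequence `v 0, …, v c = v 0`, each consecutive pair joined by an existing edge
traversed either forwards or backwards, as recorded by `dir`) has sign `+1`. -/
def StructurallyBalanced {n m : ℕ} (A : Matrix (Fin n) (Fin n) ℝ)
    (B : Matrix (Fin n) (Fin m) ℝ) : Prop :=
  ∀ (c : ℕ), 1 ≤ c → ∀ v : Fin (c + 1) → (Fin n ⊕ Fin m), v (Fin.last c) = v 0 →
    ∀ dir : Fin c → Bool,
      (∀ t : Fin c, if dir t then EdgeExists A B (v t.castSucc) (v t.succ)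
        else EdgeExists A B (v t.succ) (v t.castSucc)) →
      (∏ t : Fin c, if dir t then edgeSign A B (v t.castSucc) (v t.succ)
        else edgeSign A B (v t.succ) (v t.castSucc)) = 1

namespace Real

theorem sign_eq_coe_sign (r : ℝ) : Real.sign r = (SignType.sign r : ℝ) := by
  rcases lt_trichotomy r 0 with h | rfl | h
  · simp [Real.sign_of_neg h, h]
  · simp [Real.sign_zero]
  · simp [Real.sign_of_pos h, h]

theorem sign_mul (x y : ℝ) : Real.sign (x * y) = Real.sign x * Real.sign y := by
  simp only [sign_eq_coe_sign, _root_.sign_mul, SignType.coe_mul]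

theorem sign_mul_self_of_ne_zero {r : ℝ} (h : r ≠ 0) : Real.sign r * Real.sign r = 1 := by
  rcases Real.sign_apply_eq_of_ne_zero r h with h | h <;> rw [h] <;> norm_num

theorem sign_sum_eq_of_forall_sign_eq {ι : Type*} [Fintype ι] {f : ι → ℝ} {p₀ : ι}
    (h₀ : f p₀ ≠ 0) (h : ∀ p, f p ≠ 0 → Real.sign (f p) = Real.sign (f p₀)) :
    Real.sign (∑ p, f p) = Real.sign (f p₀) := by
  wlog hpos : 0 < f p₀ generalizing f
  · have hneg : f p₀ < 0 := lt_of_le_of_ne (not_lt.1 hpos) h₀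
    have := this (f := fun p => -f p) (neg_ne_zero.2 h₀)
      (fun p hp => by rw [Real.sign_neg, Real.sign_neg, h p (neg_ne_zero.1 hp)])
      (neg_pos.2 hneg)
    simpa only [Finset.sum_neg_distrib, Real.sign_neg, neg_inj] using this
  have hnonneg : ∀ p ∈ Finset.univ, 0 ≤ f p := fun p _ => by
    by_cases hp : f p = 0
    · exact hp.ge
    · have := Real.sign_mul_pos_of_ne_zero (f p) hp
      rw [h p hp, Real.sign_of_pos hpos, one_mul] at this
      exact this.le
  rw [Real.sign_of_pos hpos,
    Real.sign_of_pos (Finset.sum_pos' hnonneg ⟨p₀, Finset.mem_univ _, hpos⟩)]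

theorem sign_sum_congr {ι : Type*} [Fintype ι] {f g : ι → ℝ}
    (hfg : ∀ p, Real.sign (g p) = Real.sign (f p))
    (hf : ∀ p q, f p ≠ 0 → f q ≠ 0 → Real.sign (f p) = Real.sign (f q)) :
    Real.sign (∑ p, g p) = Real.sign (∑ p, f p) := by
  have hzero : ∀ p, g p = 0 ↔ f p = 0 := fun p => by
    rw [← Real.sign_eq_zero_iff, hfg, Real.sign_eq_zero_iff]
  by_cases hf₀ : ∀ p, f p = 0
  · simp only [hf₀, fun p => (hzero p).2 (hf₀ p), Finset.sum_const_zero]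
  obtain ⟨p₀, h₀⟩ := not_forall.1 hf₀
  rw [sign_sum_eq_of_forall_sign_eq (p₀ := p₀) (mt (hzero p₀).1 h₀)
      (fun p hp => by rw [hfg, hfg]; exact hf p p₀ (mt (hzero p).2 hp) h₀),
    sign_sum_eq_of_forall_sign_eq h₀ (fun p hp => hf p p₀ hp h₀), hfg]

end Real

inductive SemiWalk {V : Type*} (E : V → V → Prop) (σ : V → V → ℝ) : V → V → ℝ → Prop
  | nil (a : V) : SemiWalk E σ a a 1
  | fwd {a b c : V} {s : ℝ} : E a b → SemiWalk E σ b c s → SemiWalk E σ a c (σ a b * s)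
  | bwd {a b c : V} {s : ℝ} : E b a → SemiWalk E σ b c s → SemiWalk E σ a c (σ b a * s)

/-- The encoding of semi-walks used in `StructurallyBalanced`. -/
def IsSemiWalkSeq {V : Type*} (E : V → V → Prop) (σ : V → V → ℝ) {c : ℕ}
    (v : Fin (c + 1) → V) (dir : Fin c → Bool) (s : ℝ) : Prop :=
  (∀ t : Fin c, if dir t then E (v t.castSucc) (v t.succ) else E (v t.succ) (v t.castSucc)) ∧
    (∏ t : Fin c, if dir t then σ (v t.castSucc) (v t.succ)
      else σ (v t.succ) (v t.castSucc)) = s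

section SemiWalks

variable {V : Type*} {E : V → V → Prop} {σ : V → V → ℝ}

theorem IsSemiWalkSeq.cons {c : ℕ} {v : Fin (c + 1) → V} {dir : Fin c → Bool} {s : ℝ}
    (hv : IsSemiWalkSeq E σ v dir s) (a : V) (d : Bool) (h : if d then E a (v 0) else E (v 0) a) :
    IsSemiWalkSeq E σ (Fin.cons a v : Fin (c + 2) → V) (Fin.cons d dir)
      ((if d then σ a (v 0) else σ (v 0) a) * s) := by
  refine ⟨fun t => ?_, ?_⟩
  · cases t using Fin.cases with
    | zero => simpa using h
    | succ t => simpa [← Fin.succ_castSucc] using hv.1 t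
  · simp [Fin.prod_univ_succ, hv.2]

namespace SemiWalk

variable {a b c : V} {s t : ℝ}

theorem append (p : SemiWalk E σ a b s) (q : SemiWalk E σ b c t) :
    SemiWalk E σ a c (s * t) := by
  induction p with
  | nil => simpa using q
  | fwd h _ ih => rw [mul_assoc]; exact .fwd h (ih q)
  | bwd h _ ih => rw [mul_assoc]; exact .bwd h (ih q)

theorem snoc (p : SemiWalk E σ a b s) (h : E b c) : SemiWalk E σ a c (s * σ b c) := by
  simpa using p.append (.fwd h (.nil c))

theorem reverse (p : SemiWalk E σ a b s) : SemiWalk E σ b a s := by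
  induction p with
  | nil a => exact .nil a
  | fwd h _ ih => rw [mul_comm]; simpa using ih.append (.bwd h (.nil _))
  | bwd h _ ih => rw [mul_comm]; simpa using ih.append (.fwd h (.nil _))

theorem exists_isSemiWalkSeq (p : SemiWalk E σ a b s) :
    ∃ (c : ℕ) (v : Fin (c + 1) → V) (dir : Fin c → Bool),
      v 0 = a ∧ v (Fin.last c) = b ∧ IsSemiWalkSeq E σ v dir s := by
  induction p with
  | nil a => exact ⟨0, fun _ => a, Fin.elim0, rfl, rfl, fun t => t.elim0, by simp⟩
  | @fwd a _ _ _ h _ ih =>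
    obtain ⟨c, v, dir, rfl, hlast, hv⟩ := ih
    exact ⟨c + 1, _, _, rfl, by simpa [← Fin.succ_last] using hlast, hv.cons a true h⟩
  | @bwd a _ _ _ h _ ih =>
    obtain ⟨c, v, dir, rfl, hlast, hv⟩ := ih
    exact ⟨c + 1, _, _, rfl, by simpa [← Fin.succ_last] using hlast, hv.cons a false h⟩

end SemiWalk

end SemiWalks

def EntrySignsRealized {n m : ℕ} (A : Matrix (Fin n) (Fin n) ℝ) (B : Matrix (Fin n) (Fin m) ℝ)
    (j : Fin m) (M : Matrix (Fin n) (Fin m) ℝ) : Prop :=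
  ∀ p, M p j ≠ 0 →
    SemiWalk (EdgeExists A B) (edgeSign A B) (Sum.inr j) (Sum.inl p) (Real.sign (M p j))

section SignedSystem

variable {n m : ℕ} {A A' : Matrix (Fin n) (Fin n) ℝ} {B B' : Matrix (Fin n) (Fin m) ℝ}
  {M M' : Matrix (Fin n) (Fin m) ℝ} {j : Fin m}

theorem EntrySignsRealized.semiWalk_mul (hM : EntrySignsRealized A B j M) {i p : Fin n}
    (hp : A i p * M p j ≠ 0) :
    SemiWalk (EdgeExists A B) (edgeSign A B) (Sum.inr j) (Sum.inl i)
      (Real.sign (A i p * M p j)) := by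
  rw [Real.sign_mul, mul_comm]
  exact (hM p (right_ne_zero_of_mul hp)).snoc (left_ne_zero_of_mul hp)

namespace StructurallyBalanced

theorem semiWalk_closed (hbal : StructurallyBalanced A B) {a : Fin n ⊕ Fin m} {s : ℝ}
    (p : SemiWalk (EdgeExists A B) (edgeSign A B) a a s) : s = 1 := by
  obtain ⟨c, v, dir, h0, hlast, hedges, rfl⟩ := p.exists_isSemiWalkSeq
  rcases Nat.eq_zero_or_pos c with rfl | hc
  · simp
  · exact hbal c hc v (hlast.trans h0.symm) dir hedges

theorem semiWalk_sign_eq (hbal : StructurallyBalanced A B) {a b : Fin n ⊕ Fin m} {s t : ℝ}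
    (p : SemiWalk (EdgeExists A B) (edgeSign A B) a b s)
    (q : SemiWalk (EdgeExists A B) (edgeSign A B) a b t) (ht : t * t = 1) : s = t := by
  have hst : s * t = 1 := hbal.semiWalk_closed (p.append q.reverse)
  calc s = s * t * t := by rw [mul_assoc, ht, mul_one]
    _ = t := by rw [hst, one_mul]

theorem sign_mul_apply_term_eq (hbal : StructurallyBalanced A B)
    (hM : EntrySignsRealized A B j M) {i p q : Fin n} (hp : A i p * M p j ≠ 0)
    (hq : A i q * M q j ≠ 0) : Real.sign (A i p * M p j) = Real.sign (A i q * M q j) :=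
  hbal.semiWalk_sign_eq (hM.semiWalk_mul hp) (hM.semiWalk_mul hq)
    (Real.sign_mul_self_of_ne_zero hq)

theorem entrySignsRealized_mul (hbal : StructurallyBalanced A B)
    (hM : EntrySignsRealized A B j M) : EntrySignsRealized A B j (A * M) := by
  intro i hi
  rw [Matrix.mul_apply] at hi ⊢
  obtain ⟨p, -, hp⟩ := Finset.exists_ne_zero_of_sum_ne_zero hi
  rw [Real.sign_sum_eq_of_forall_sign_eq (f := fun q => A i q * M q j) hp
    fun q hq => hbal.sign_mul_apply_term_eq hM hq hp]
  exact hM.semiWalk_mul hp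

theorem entrySignsRealized_pow_mul (hbal : StructurallyBalanced A B) (j : Fin m) (e : ℕ) :
    EntrySignsRealized A B j (A ^ e * B) := by
  induction e with
  | zero =>
    intro i hi
    rw [pow_zero, Matrix.one_mul] at hi ⊢
    rw [← mul_one (Real.sign (B i j))]
    exact .fwd (b := Sum.inl i) hi (.nil _)
  | succ e ih =>
    rw [pow_succ', Matrix.mul_assoc]
    exact hbal.entrySignsRealized_mul ih

theorem sign_mul_apply_eq (hbal : StructurallyBalanced A B)
    (hA : ∀ p q, Real.sign (A' p q) = Real.sign (A p q)) (hM : EntrySignsRealized A B j M)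
    (hMM' : ∀ p, Real.sign (M' p j) = Real.sign (M p j)) (i : Fin n) :
    Real.sign ((A' * M') i j) = Real.sign ((A * M) i j) := by
  simp only [Matrix.mul_apply]
  exact Real.sign_sum_congr (fun p => by rw [Real.sign_mul, Real.sign_mul, hA, hMM'])
    fun p q => hbal.sign_mul_apply_term_eq hM

theorem sign_pow_mul_apply_eq (hbal : StructurallyBalanced A B) (hpat : SamePattern A A' B B')
    (e : ℕ) (i : Fin n) (j : Fin m) :
    Real.sign ((A' ^ e * B') i j) = Real.sign ((A ^ e * B) i j) := by
  induction e generalizing i with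
  | zero => simpa using hpat.2 i j
  | succ e ih =>
    rw [pow_succ', pow_succ', Matrix.mul_assoc, Matrix.mul_assoc]
    exact hbal.sign_mul_apply_eq hpat.1 (hbal.entrySignsRealized_pow_mul j e) ih i

end StructurallyBalanced

end SignedSystem

/-- If the signed graph of the system is structurally balanced, then the controllability
matrix is sign definite: every pair with the same sign pattern yields the same signs for
all entries of `A^{d-1} B`, `d ∈ {1,…,n}`. -/
theorem ctrb_sign_definite_of_structurallyBalanced {n m : ℕ}
    (A : Matrix (Fin n) (Fin n) ℝ) (B : Matrix (Fin n) (Fin m) ℝ)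
    (hbal : StructurallyBalanced A B) :
    ∀ (A' : Matrix (Fin n) (Fin n) ℝ) (B' : Matrix (Fin n) (Fin m) ℝ),
      SamePattern A A' B B' →
      ∀ (i : Fin n) (d : ℕ) (j : Fin m), 1 ≤ d → d ≤ n →
        Real.sign ((A' ^ (d - 1) * B') i j) = Real.sign ((A ^ (d - 1) * B) i j) :=
  fun _ _ hpat i d j _ _ => hbal.sign_pow_mul_apply_eq hpat (d - 1) i j
end

section
/- Assume m = 1 (a single input) and that the graph of the system is an input-rooted out-branching: every state i is the endpoint of exactly one walk from the input (unique over all lengths d and all index sequences); let d_i denote the length of this unique walk and d_max = max_i d_i. Then a subset S of {1,...,n} of states is herdable if and only if there exist sets X_d in {P_d, N_d, emptyset} for d = 1,...,d_max such that S is contained in the union over d of X_d; in particular, every such union of sets X_d is itself a herdable set. -/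
/-! In an out-branching every state `i` is reached by exactly one walk; its length `len i` is at
most `n`, since the depths along a walk are `1, 2, …`, so the walk visits distinct states. Hence
`(A ^ e * B) i 0`, the total weight of the walks of length `e + 1` ending at `i`, vanishes unless
`e + 1 = len i`, where it is the weight `ρᵢ` of that walk. The range of the controllability
matrix is therefore exactly the set of vectors `i ↦ ρᵢ * c (len i)` with one free coefficient per
depth, and `i ∈ P_d` (resp. `N_d`) means `d = len i` and `ρᵢ > 0` (resp. `< 0`). Choosing the sign
of `c d` is the same as choosing `X_d ∈ {P_d, N_d, ∅}`. -/

section Walks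

variable {n m : ℕ} {A : Matrix (Fin n) (Fin n) ℝ} {B : Matrix (Fin n) (Fin m) ℝ} {j : Fin m}

lemma isWalk_snoc {i : Fin n} {e : ℕ} (k : Fin (e + 1) → Fin n) (v : Fin n) :
    IsWalk A B j i (Fin.snoc k v) ↔
      v = i ∧ A v (k (Fin.last e)) ≠ 0 ∧ IsWalk A B j (k (Fin.last e)) k := by
  have h0 : (0 : Fin (e + 2)) = Fin.castSucc 0 := rfl
  simp only [IsWalk, Fin.forall_fin_succ', Fin.succ_last, Fin.succ_castSucc, Fin.snoc_last,
    Fin.snoc_castSucc, h0]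
  tauto

lemma walkWeight_snoc {e : ℕ} (k : Fin (e + 1) → Fin n) (v : Fin n) :
    walkWeight A B j (Fin.snoc k v) = A v (k (Fin.last e)) * walkWeight A B j k := by
  have h0 : (0 : Fin (e + 2)) = Fin.castSucc 0 := rfl
  simp only [walkWeight, Fin.prod_univ_castSucc, Fin.succ_castSucc, Fin.snoc_castSucc,
    Fin.succ_last, Fin.snoc_last, h0]
  ring

lemma rho_one (i : Fin n) : rho A B j i 1 = B i j := by
  classical
  rw [rho, ← (Equiv.funUnique (Fin 1) (Fin n)).symm.sum_comp]
  by_cases h : B i j = 0 <;> simp [IsWalk, walkWeight, ite_and, h]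

lemma rho_add_two (i : Fin n) (e : ℕ) :
    rho A B j i (e + 2) = ∑ v, A i v * rho A B j v (e + 1) := by
  classical
  simp only [rho, Finset.mul_sum]
  rw [Finset.sum_comm, ← (Fin.snocEquiv fun _ => Fin n).sum_comp, Fintype.sum_prod_type,
    Finset.sum_comm]
  refine Finset.sum_congr rfl fun k _ => ?_
  have hsnoc : ∀ v, (Fin.snocEquiv fun _ => Fin n) (v, k) = Fin.snoc k v := fun _ => rfl
  simp only [hsnoc, isWalk_snoc, walkWeight_snoc]
  rw [Finset.sum_eq_single i (fun v _ hv => if_neg fun h => hv h.1) (by simp),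
    Finset.sum_eq_single (k (Fin.last e))
      (fun v _ hv => by rw [if_neg fun h => hv h.1.symm, mul_zero]) (by simp)]
  by_cases hA : A i (k (Fin.last e)) = 0 <;> simp [hA]

lemma pow_mul_apply_eq_rho (i : Fin n) (e : ℕ) : (A ^ e * B) i j = rho A B j i (e + 1) := by
  induction e generalizing i with
  | zero => simp [rho_one]
  | succ e ih =>
      rw [pow_succ', Matrix.mul_assoc, Matrix.mul_apply, rho_add_two]
      simp only [ih]

lemma IsWalk.take {i : Fin n} {e : ℕ} {k : Fin (e + 1) → Fin n} (hk : IsWalk A B j i k)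
    (t : Fin (e + 1)) : IsWalk A B j (k t) fun s : Fin (t + 1) => k (Fin.castLE t.isLt s) := by
  refine ⟨rfl, hk.2.1, fun s => ?_⟩
  have hs : (s : ℕ) < e := by omega
  convert hk.2.2 ⟨s, hs⟩ using 3 <;> simp [Fin.ext_iff]

end Walks

def IsOutBranching {n m : ℕ} (A : Matrix (Fin n) (Fin n) ℝ) (B : Matrix (Fin n) (Fin m) ℝ)
    (j : Fin m) : Prop :=
  ∀ i : Fin n, ∃! w : (e : ℕ) × (Fin (e + 1) → Fin n), IsWalk A B j i w.2

def IsDepth {n m : ℕ} (A : Matrix (Fin n) (Fin n) ℝ) (B : Matrix (Fin n) (Fin m) ℝ)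
    (j : Fin m) (len : Fin n → ℕ) : Prop :=
  ∀ (i : Fin n) (e : ℕ) (k : Fin (e + 1) → Fin n), IsWalk A B j i k → len i = e + 1

section OutBranching

variable {n m : ℕ} {A : Matrix (Fin n) (Fin n) ℝ} {B : Matrix (Fin n) (Fin m) ℝ} {j : Fin m}
  {len : Fin n → ℕ}

lemma IsOutBranching.rho_eq_walkWeight (hout : IsOutBranching A B j) {i : Fin n} {e : ℕ}
    {k : Fin (e + 1) → Fin n} (hk : IsWalk A B j i k) :
    rho A B j i (e + 1) = walkWeight A B j k := by
  classical
  have hunique : ∀ k' : Fin (e + 1) → Fin n, IsWalk A B j i k' → k' = k := fun k' hk' =>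
    eq_of_heq (Sigma.mk.inj_iff.1 ((hout i).unique (y₁ := ⟨e, k'⟩) hk' hk)).2
  rw [rho, Finset.sum_eq_single_of_mem k (Finset.mem_univ k)
    fun k' _ hk' => if_neg fun h => hk' (hunique k' h), if_pos hk]

lemma IsDepth.rho_eq_zero (hlen : IsDepth A B j len) {i : Fin n} {d : ℕ} (hd : d ≠ len i) :
    rho A B j i d = 0 := by
  classical
  cases d with
  | zero => rfl
  | succ e => exact Finset.sum_eq_zero fun k _ => if_neg fun hk => hd (hlen i e k hk).symm

lemma IsDepth.succ_le_card (hlen : IsDepth A B j len) {i : Fin n} {e : ℕ}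
    {k : Fin (e + 1) → Fin n} (hk : IsWalk A B j i k) : e + 1 ≤ n := by
  have hinj : Function.Injective k := fun s t hst => Fin.ext <| by
    have hs := hlen _ _ _ (hk.take s)
    have ht := hlen _ _ _ (hk.take t)
    rw [hst] at hs
    omega
  simpa using Fintype.card_le_of_injective k hinj

lemma one_le_depth (hout : IsOutBranching A B j) (hlen : IsDepth A B j len) (i : Fin n) :
    1 ≤ len i := by
  obtain ⟨⟨e, k⟩, hk, -⟩ := hout i
  rw [hlen i e k hk]
  omega

lemma depth_le_card (hout : IsOutBranching A B j) (hlen : IsDepth A B j len) (i : Fin n) :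
    len i ≤ n := by
  obtain ⟨⟨e, k⟩, hk, -⟩ := hout i
  rw [hlen i e k hk]
  exact hlen.succ_le_card hk

lemma exists_isWalk_iff (hout : IsOutBranching A B j) (hlen : IsDepth A B j len) (p : ℝ → Prop)
    (i : Fin n) (e : ℕ) :
    (∃ k : Fin (e + 1) → Fin n, IsWalk A B j i k ∧ p (walkWeight A B j k)) ↔
      e + 1 = len i ∧ p (rho A B j i (e + 1)) := by
  constructor
  · rintro ⟨k, hk, hp⟩
    exact ⟨(hlen i e k hk).symm, hout.rho_eq_walkWeight hk ▸ hp⟩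
  · rintro ⟨he, hp⟩
    obtain ⟨⟨e', k⟩, hk, -⟩ := hout i
    obtain rfl : e' = e := by have := hlen i e' k hk; omega
    exact ⟨k, hk, hout.rho_eq_walkWeight hk ▸ hp⟩

lemma mem_Pset_iff (hout : IsOutBranching A B j) (hlen : IsDepth A B j len) (i : Fin n)
    (d : ℕ) : i ∈ Pset A B j d ↔ d = len i ∧ 0 < rho A B j i d := by
  cases d with
  | zero => simp [Pset, rho]
  | succ e => exact exists_isWalk_iff hout hlen (0 < ·) i e

lemma mem_Nset_iff (hout : IsOutBranching A B j) (hlen : IsDepth A B j len) (i : Fin n)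
    (d : ℕ) : i ∈ Nset A B j d ↔ d = len i ∧ rho A B j i d < 0 := by
  cases d with
  | zero => simp [Nset, rho]
  | succ e => exact exists_isWalk_iff hout hlen (· < 0) i e

lemma sum_rho_mul_eq (hout : IsOutBranching A B j) (hlen : IsDepth A B j len) (i : Fin n)
    (f : ℕ → ℝ) :
    ∑ d : Fin n, rho A B j i (d + 1) * f d = rho A B j i (len i) * f (len i - 1) := by
  have h1 := one_le_depth hout hlen i
  have hn := depth_le_card hout hlen i
  rw [Fin.sum_univ_eq_sum_range (fun d => rho A B j i (d + 1) * f d) n,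
    Finset.sum_eq_single_of_mem (len i - 1) (Finset.mem_range.2 (by omega))
      fun d _ hd => by rw [hlen.rho_eq_zero (by omega), zero_mul],
    Nat.sub_add_cancel h1]

def signedReachSet (A : Matrix (Fin n) (Fin n) ℝ) (B : Matrix (Fin n) (Fin m) ℝ) (j : Fin m)
    (c : ℕ → ℝ) (d : ℕ) : Set (Fin n) :=
  if 0 < c d then Pset A B j d else if c d < 0 then Nset A B j d else ∅

lemma signedReachSet_eq (c : ℕ → ℝ) (d : ℕ) :
    signedReachSet A B j c d = Pset A B j d ∨ signedReachSet A B j c d = Nset A B j d ∨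
      signedReachSet A B j c d = ∅ := by
  unfold signedReachSet
  split_ifs <;> simp

lemma mem_signedReachSet_depth (hout : IsOutBranching A B j) (hlen : IsDepth A B j len)
    {c : ℕ → ℝ} {i : Fin n} (h : 0 < rho A B j i (len i) * c (len i)) :
    i ∈ signedReachSet A B j c (len i) := by
  rcases mul_pos_iff.1 h with ⟨hr, hc⟩ | ⟨hr, hc⟩
  · rw [signedReachSet, if_pos hc]
    exact (mem_Pset_iff hout hlen i _).2 ⟨rfl, hr⟩
  · rw [signedReachSet, if_neg hc.not_gt, if_pos hc]
    exact (mem_Nset_iff hout hlen i _).2 ⟨rfl, hr⟩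

lemma exists_pos_rho_mul_of_mem (hout : IsOutBranching A B j) (hlen : IsDepth A B j len)
    {X : ℕ → Set (Fin n)} (hX : ∀ d, X d = Pset A B j d ∨ X d = Nset A B j d ∨ X d = ∅) :
    ∃ c : ℕ → ℝ, ∀ d, ∀ i ∈ X d, 0 < rho A B j i (len i) * c (len i) := by
  classical
  refine ⟨fun d => if X d = Pset A B j d then 1 else -1, fun d i hi => ?_⟩
  rcases hX d with h | h | h
  · obtain ⟨rfl, hr⟩ := (mem_Pset_iff hout hlen i d).1 (h ▸ hi)
    simpa [h] using hr
  · obtain ⟨rfl, hr⟩ := (mem_Nset_iff hout hlen i _).1 (h ▸ hi)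
    have hP : X (len i) ≠ Pset A B j (len i) := fun hP =>
      hr.not_gt ((mem_Pset_iff hout hlen i _).1 (hP ▸ hi)).2
    simpa [hP] using hr
  · exact absurd (h ▸ hi) (Set.notMem_empty i)

end OutBranching

section Controllability

variable {n : ℕ} {A : Matrix (Fin n) (Fin n) ℝ} {B : Matrix (Fin n) (Fin 1) ℝ} {len : Fin n → ℕ}

lemma mulVec_ctrb_apply (y : Fin n × Fin 1 → ℝ) (i : Fin n) :
    (ctrb A B).mulVec y i = ∑ d : Fin n, rho A B 0 i (d + 1) * y (d, 0) := by
  simp [Matrix.mulVec, dotProduct, Fintype.sum_prod_type, ctrb, pow_mul_apply_eq_rho]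

lemma exists_mulVec_ctrb_eq_iff (hout : IsOutBranching A B 0) (hlen : IsDepth A B 0 len)
    (x : Fin n → ℝ) :
    (∃ y, (ctrb A B).mulVec y = x) ↔
      ∃ c : ℕ → ℝ, x = fun i => rho A B 0 i (len i) * c (len i) := by
  constructor
  · rintro ⟨y, rfl⟩
    let f : ℕ → ℝ := fun d => if h : d < n then y (⟨d, h⟩, 0) else 0
    refine ⟨fun d => f (d - 1), funext fun i => ?_⟩
    rw [mulVec_ctrb_apply, ← sum_rho_mul_eq hout hlen i f]
    simp [f]
  · rintro ⟨c, rfl⟩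
    refine ⟨fun p => c (p.1 + 1), funext fun i => ?_⟩
    rw [mulVec_ctrb_apply, sum_rho_mul_eq hout hlen i (fun d => c (d + 1)),
      Nat.sub_add_cancel (one_le_depth hout hlen i)]

end Controllability

/-- Single-input system whose graph is an input-rooted out-branching: every state is the
endpoint of exactly one walk from the input (unique over all lengths and all index
sequences; a walk of length `e + 1` is encoded by `e` together with its state sequence).
`len i` is the length of this unique walk and `dmax` its maximum over all states.
Then a set `S` of states is herdable (there is `k` in the range of the controllability
matrix with `k i > 0` on `S`) iff `S ⊆ ⋃_{d=1}^{dmax} X_d` for some choice of sets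
`X_d ∈ {P_d, N_d, ∅}`; moreover every such union is itself herdable. -/
theorem herdable_iff_union_outBranching {n : ℕ}
    (A : Matrix (Fin n) (Fin n) ℝ) (B : Matrix (Fin n) (Fin 1) ℝ)
    (hout : ∀ i : Fin n, ∃! w : (e : ℕ) × (Fin (e + 1) → Fin n), IsWalk A B 0 i w.2)
    (len : Fin n → ℕ)
    (hlen : ∀ (i : Fin n) (e : ℕ) (k : Fin (e + 1) → Fin n), IsWalk A B 0 i k →
      len i = e + 1)
    (dmax : ℕ) (hdmax : dmax = Finset.univ.sup len) :
    (∀ S : Set (Fin n),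
      (∃ k : Fin n → ℝ, (∃ y : Fin n × Fin 1 → ℝ, (ctrb A B).mulVec y = k) ∧
          ∀ i ∈ S, 0 < k i) ↔
        ∃ X : ℕ → Set (Fin n),
          (∀ d : ℕ, X d = Pset A B 0 d ∨ X d = Nset A B 0 d ∨ X d = ∅) ∧
          S ⊆ ⋃ d ∈ Finset.Icc 1 dmax, X d) ∧
    (∀ X : ℕ → Set (Fin n),
      (∀ d : ℕ, X d = Pset A B 0 d ∨ X d = Nset A B 0 d ∨ X d = ∅) →
      ∃ k : Fin n → ℝ, (∃ y : Fin n × Fin 1 → ℝ, (ctrb A B).mulVec y = k) ∧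
        ∀ i ∈ ⋃ d ∈ Finset.Icc 1 dmax, X d, 0 < k i) := by
  have union_herdable : ∀ X : ℕ → Set (Fin n),
      (∀ d : ℕ, X d = Pset A B 0 d ∨ X d = Nset A B 0 d ∨ X d = ∅) →
      ∃ k : Fin n → ℝ, (∃ y : Fin n × Fin 1 → ℝ, (ctrb A B).mulVec y = k) ∧
        ∀ i ∈ ⋃ d ∈ Finset.Icc 1 dmax, X d, 0 < k i := by
    intro X hX
    obtain ⟨c, hc⟩ := exists_pos_rho_mul_of_mem hout hlen hX
    refine ⟨_, (exists_mulVec_ctrb_eq_iff hout hlen _).2 ⟨c, rfl⟩, fun i hi => ?_⟩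
    obtain ⟨d, -, hid⟩ := Set.mem_iUnion₂.1 hi
    exact hc d i hid
  refine ⟨fun S => ⟨?_, fun ⟨X, hX, hSX⟩ => ?_⟩, union_herdable⟩
  · rintro ⟨k, hk, hS⟩
    obtain ⟨c, rfl⟩ := (exists_mulVec_ctrb_eq_iff hout hlen k).1 hk
    refine ⟨signedReachSet A B 0 c, signedReachSet_eq c, fun i hi => Set.mem_iUnion₂.2
      ⟨len i, ?_, mem_signedReachSet_depth hout hlen (hS i hi)⟩⟩
    exact Finset.mem_Icc.2 ⟨one_le_depth hout hlen i, hdmax ▸ Finset.le_sup (Finset.mem_univ i)⟩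
  · obtain ⟨k, hk, hpos⟩ := union_herdable X hX
    exact ⟨k, hk, fun i hi => hpos i (hSX hi)⟩
end

section
/- If the system is completely herdable, then it is input connectable: for every state i in {1,...,n} there exist an input j in {1,...,m}, a length d >= 1, and a walk of length d from input j to state i. -/
/-- There is at least one walk of length `d` from input `j` to state `i`. -/
def ExistsWalk {n m : ℕ} (A : Matrix (Fin n) (Fin n) ℝ) (B : Matrix (Fin n) (Fin m) ℝ)
    (j : Fin m) (i : Fin n) : ℕ → Prop
  | 0 => False
  | e + 1 => ∃ k : Fin (e + 1) → Fin n, IsWalk A B j i k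


lemma existsWalk_of_pow_ne {n m : ℕ} (A : Matrix (Fin n) (Fin n) ℝ)
    (B : Matrix (Fin n) (Fin m) ℝ) (j : Fin m) :
    ∀ (d : ℕ) (i : Fin n), (A ^ d * B) i j ≠ 0 → ExistsWalk A B j i (d + 1) := by
  intro d
  induction d with
  | zero =>
    intro i h
    simp only [pow_zero, Matrix.one_mul] at h
    exact ⟨fun _ => i, rfl, h, fun t => t.elim0⟩
  | succ e ih =>
    intro i h
    rw [pow_succ', Matrix.mul_assoc] at h
    have : ∃ i' : Fin n, A i i' ≠ 0 ∧ (A ^ e * B) i' j ≠ 0 := by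
      by_contra hc
      push_neg at hc
      apply h
      rw [Matrix.mul_apply]
      apply Finset.sum_eq_zero
      intro x _
      rcases eq_or_ne (A i x) 0 with h0 | h0
      · rw [h0, zero_mul]
      · rw [hc x h0, mul_zero]
    obtain ⟨i', hA, hB⟩ := this
    obtain ⟨k', hk'⟩ := ih i' hB
    refine ⟨Fin.snoc k' i, ?_, ?_, ?_⟩
    · simp
    · have h0 : (Fin.snoc k' i : Fin (e + 2) → Fin n) 0 = k' 0 := by
        simpa using Fin.snoc_castSucc (α := fun _ => Fin n) i k' (0 : Fin (e+1))
      rw [h0]; exact hk'.2.1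
    · intro t
      refine Fin.lastCases ?_ ?_ t
      · have h1 : (Fin.last e).succ = Fin.last (e + 1) := rfl
        rw [h1, Fin.snoc_last, Fin.snoc_castSucc, hk'.1]
        exact hA
      · intro t'
        have h1 : (t'.castSucc).succ = (t'.succ).castSucc := (Fin.succ_castSucc t').symm
        rw [h1, Fin.snoc_castSucc, Fin.snoc_castSucc]
        exact hk'.2.2 t'

/-- If the system is completely herdable (the range of the controllability matrix
contains an entrywise positive vector), then it is input connectable: every state is
reached by a walk of some length `d ≥ 1` from some input. -/
theorem inputConnectable_of_completelyHerdable {n m : ℕ}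
    (A : Matrix (Fin n) (Fin n) ℝ) (B : Matrix (Fin n) (Fin m) ℝ)
    (H : ∃ k : Fin n → ℝ, (∃ y : Fin n × Fin m → ℝ, (ctrb A B).mulVec y = k) ∧
      ∀ i : Fin n, 0 < k i) :
    ∀ i : Fin n, ∃ (j : Fin m) (d : ℕ), 1 ≤ d ∧ ExistsWalk A B j i d := by
  intro i
  by_contra hc
  push_neg at hc
  obtain ⟨k, ⟨y, hy⟩, hk⟩ := H
  have hzero : ∀ p : Fin n × Fin m, ctrb A B i p = 0 := by
    intro p
    by_contra h0
    have := existsWalk_of_pow_ne A B p.2 p.1 i h0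
    exact hc p.2 (p.1 + 1) (Nat.succ_le_succ (Nat.zero_le _)) this
  have : k i = 0 := by
    rw [← hy]
    simp only [Matrix.mulVec, dotProduct]
    exact Finset.sum_eq_zero fun p _ => by show ctrb A B i p * y p = 0; rw [hzero p, zero_mul]
  exact absurd (hk i) (by rw [this]; exact lt_irrefl 0)
end

section
/- Suppose the linear system is positive, i.e., A is Metzler (A_{pq} >= 0 for all p not equal to q) and every entry of B is nonnegative. Then the system is completely herdable if and only if it is input connectable: for every state i in {1,...,n} there exist an input j in {1,...,m}, a length d >= 1, and a walk of length d from input j to state i. -/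
lemma walk_of_ne {n m : ℕ} (A : Matrix (Fin n) (Fin n) ℝ) (B : Matrix (Fin n) (Fin m) ℝ) :
    ∀ (e : ℕ) (i : Fin n) (j : Fin m), (A ^ e * B) i j ≠ 0 → ExistsWalk A B j i (e + 1) := by
  intro e
  induction e with
  | zero =>
    intro i j h
    rw [pow_zero, Matrix.one_mul] at h
    exact ⟨fun _ => i, rfl, h, fun t => t.elim0⟩
  | succ e ih =>
    intro i j h
    rw [pow_succ', Matrix.mul_assoc, Matrix.mul_apply] at h
    obtain ⟨p, -, hp⟩ := Finset.exists_ne_zero_of_sum_ne_zero h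
    have hAp : A i p ≠ 0 := left_ne_zero_of_mul hp
    have hBp : (A ^ e * B) p j ≠ 0 := right_ne_zero_of_mul hp
    obtain ⟨k, hlast, hB0, hstep⟩ := ih p j hBp
    refine ⟨Fin.snoc k i, Fin.snoc_last .., ?_, ?_⟩
    · have h0 : (Fin.snoc k i : Fin (e + 2) → Fin n) 0 = k 0 := by
        rw [← Fin.castSucc_zero, Fin.snoc_castSucc]
      rw [h0]; exact hB0
    · intro t
      refine Fin.lastCases ?_ ?_ t
      · rw [Fin.succ_last, Fin.snoc_last, Fin.snoc_castSucc, hlast]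
        exact hAp
      · intro s
        rw [Fin.succ_castSucc, Fin.snoc_castSucc, Fin.snoc_castSucc]
        exact hstep s

lemma aux_nonneg {n m : ℕ} (A' : Matrix (Fin n) (Fin n) ℝ) (B : Matrix (Fin n) (Fin m) ℝ)
    (hA' : ∀ p q, 0 ≤ A' p q) (hB : ∀ p q, 0 ≤ B p q) :
    ∀ (e : ℕ) (p : Fin n) (q : Fin m), 0 ≤ (A' ^ e * B) p q := by
  intro e
  induction e with
  | zero => intro p q; rw [pow_zero, Matrix.one_mul]; exact hB p q
  | succ e ih =>
    intro p q
    rw [pow_succ', Matrix.mul_assoc, Matrix.mul_apply]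
    exact Finset.sum_nonneg fun r _ => mul_nonneg (hA' p r) (ih r q)

lemma aux_pos {n m : ℕ} (A A' : Matrix (Fin n) (Fin n) ℝ) (B : Matrix (Fin n) (Fin m) ℝ)
    (hA'nn : ∀ p q, 0 ≤ A' p q) (hpos : ∀ p q, A p q ≠ 0 → 0 < A' p q)
    (hB : ∀ p q, 0 ≤ B p q) :
    ∀ (e : ℕ) (i : Fin n) (j : Fin m),
      (∃ k : Fin (e + 1) → Fin n, IsWalk A B j i k) → 0 < (A' ^ e * B) i j := by
  intro e
  induction e with
  | zero =>
    rintro i j ⟨k, hlast, hB0, -⟩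
    rw [pow_zero, Matrix.one_mul]
    have : k 0 = i := hlast
    rw [← this]
    exact lt_of_le_of_ne (hB _ _) (Ne.symm hB0)
  | succ e ih =>
    rintro i j ⟨k, hlast, hB0, hstep⟩
    set p := k (Fin.castSucc (Fin.last e)) with hp
    have hwalk : IsWalk A B j p (k ∘ Fin.castSucc) := by
      refine ⟨rfl, ?_, ?_⟩
      · show B (k (Fin.castSucc 0)) j ≠ 0
        rw [Fin.castSucc_zero]; exact hB0
      · intro t
        show A (k (Fin.castSucc t.succ)) (k (Fin.castSucc t.castSucc)) ≠ 0
        rw [← Fin.succ_castSucc]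
        exact hstep t.castSucc
    have hAe : 0 < (A' ^ e * B) p j := ih p j ⟨_, hwalk⟩
    have hAip : A (k (Fin.last (e + 1))) p ≠ 0 := by
      have := hstep (Fin.last e)
      rwa [Fin.succ_last] at this
    rw [← hlast, pow_succ', Matrix.mul_assoc, Matrix.mul_apply]
    refine Finset.sum_pos' (fun r _ => mul_nonneg (hA'nn _ r) (aux_nonneg A' B hA'nn hB e r j)) ?_
    exact ⟨p, Finset.mem_univ p, mul_pos (hpos _ p hAip) hAe⟩

lemma pow_col_mem {n m : ℕ} (A : Matrix (Fin n) (Fin n) ℝ) (B : Matrix (Fin n) (Fin m) ℝ) :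
    ∀ (e : ℕ) (j : Fin m),
      (fun i => (A ^ e * B) i j) ∈ LinearMap.range (Matrix.mulVecLin (ctrb A B)) := by
  intro e
  induction e using Nat.strong_induction_on with
  | _ e IH =>
  intro j
  by_cases he : e < n
  · refine ⟨Pi.single ((⟨e, he⟩ : Fin n), j) 1, ?_⟩
    rw [Matrix.mulVecLin_apply, Matrix.mulVec_single]
    funext i
    simp [ctrb]
  · push_neg at he
    -- Cayley-Hamilton
    have hmonic := A.charpoly_monic
    have hdeg : A.charpoly.natDegree = n := by
      rw [Matrix.charpoly_natDegree_eq_dim, Fintype.card_fin]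
    have h0 : (0 : Matrix (Fin n) (Fin n) ℝ) =
        ∑ i ∈ Finset.range (n + 1), A.charpoly.coeff i • A ^ i := by
      rw [← A.aeval_self_charpoly]
      rw [Polynomial.aeval_eq_sum_range' (by omega : A.charpoly.natDegree < n + 1)]
    have hcn : A.charpoly.coeff n = 1 := by
      have := hmonic.coeff_natDegree
      rwa [hdeg] at this
    rw [Finset.sum_range_succ, hcn, one_smul] at h0
    have hAn : A ^ n = ∑ i ∈ Finset.range n, (-(A.charpoly.coeff i)) • A ^ i := by
      have h1 : A ^ n = -∑ i ∈ Finset.range n, A.charpoly.coeff i • A ^ i :=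
        eq_neg_of_add_eq_zero_right h0.symm
      rw [h1]
      simp [neg_smul, Finset.sum_neg_distrib]
    have H : A ^ e * B =
        ∑ i ∈ Finset.range n, (-(A.charpoly.coeff i)) • (A ^ (e - n + i) * B) := by
      calc A ^ e * B = A ^ (e - n) * A ^ n * B := by
            rw [← pow_add, Nat.sub_add_cancel he]
        _ = _ := by
            rw [hAn, Matrix.mul_sum, Matrix.sum_mul]
            exact Finset.sum_congr rfl fun i _ => by
              rw [Matrix.mul_smul, Matrix.smul_mul, ← pow_add]
    have hfun : (fun i => (A ^ e * B) i j) =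
        ∑ i ∈ Finset.range n, (-(A.charpoly.coeff i)) • (fun i' => (A ^ (e - n + i) * B) i' j) := by
      funext i'
      rw [H]
      simp [Matrix.sum_apply, Finset.sum_apply]
    rw [hfun]
    refine Submodule.sum_mem _ fun i hi => Submodule.smul_mem _ _ ?_
    exact IH (e - n + i) (by have := Finset.mem_range.mp hi; omega) j

lemma mulVec_mem {n m : ℕ} (A : Matrix (Fin n) (Fin n) ℝ) (B : Matrix (Fin n) (Fin m) ℝ)
    (v : Fin n → ℝ) (hv : v ∈ LinearMap.range (Matrix.mulVecLin (ctrb A B))) :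
    A.mulVec v ∈ LinearMap.range (Matrix.mulVecLin (ctrb A B)) := by
  obtain ⟨y, rfl⟩ := hv
  rw [Matrix.mulVecLin_apply, Matrix.mulVec_mulVec]
  have hexp : (A * ctrb A B).mulVec y =
      ∑ p : Fin n × Fin m, y p • (fun i => (A ^ ((p.1 : ℕ) + 1) * B) i p.2) := by
    funext i
    simp only [Matrix.mulVec, dotProduct, Finset.sum_apply, Pi.smul_apply, smul_eq_mul]
    refine Finset.sum_congr rfl fun p _ => ?_
    rw [Matrix.mul_apply]
    have : (A * ctrb A B) i p = (A ^ ((p.1 : ℕ) + 1) * B) i p.2 := by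
      rw [pow_succ', Matrix.mul_assoc, Matrix.mul_apply]
      rfl
    rw [← this, Matrix.mul_apply, mul_comm]
  rw [hexp]
  exact Submodule.sum_mem _ fun p _ => Submodule.smul_mem _ _ (pow_col_mem A B _ p.2)

lemma shift_pow_col_mem {n m : ℕ} (A : Matrix (Fin n) (Fin n) ℝ)
    (B : Matrix (Fin n) (Fin m) ℝ) (c : ℝ) :
    ∀ (e : ℕ) (j : Fin m),
      (fun i => ((A + c • (1 : Matrix (Fin n) (Fin n) ℝ)) ^ e * B) i j) ∈
        LinearMap.range (Matrix.mulVecLin (ctrb A B)) := by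
  intro e
  induction e with
  | zero =>
    intro j
    have := pow_col_mem A B 0 j
    simpa using this
  | succ e ih =>
    intro j
    set X := (A + c • (1 : Matrix (Fin n) (Fin n) ℝ)) ^ e * B with hX
    have hmat : (A + c • (1 : Matrix (Fin n) (Fin n) ℝ)) ^ (e + 1) * B = A * X + c • X := by
      rw [pow_succ', Matrix.mul_assoc, ← hX, Matrix.add_mul, Matrix.smul_mul, Matrix.one_mul]
    have hfun : (fun i => ((A + c • (1 : Matrix (Fin n) (Fin n) ℝ)) ^ (e + 1) * B) i j) =
        A.mulVec (fun i => X i j) + c • (fun i => X i j) := by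
      funext i
      rw [hmat]
      simp only [Matrix.add_apply, Matrix.smul_apply, Pi.add_apply, Pi.smul_apply,
        Matrix.mulVec, dotProduct, Matrix.mul_apply, smul_eq_mul]
    rw [hfun]
    exact Submodule.add_mem _ (mulVec_mem A B _ (ih j)) (Submodule.smul_mem _ _ (ih j))

/-- A positive linear system (`A` Metzler and `B` entrywise nonnegative) is completely
herdable (the range of the controllability matrix contains an entrywise positive vector)
iff it is input connectable: every state is reached by a walk of some length `d ≥ 1`
from some input. -/
theorem positive_completelyHerdable_iff_inputConnectable {n m : ℕ}
    (A : Matrix (Fin n) (Fin n) ℝ) (B : Matrix (Fin n) (Fin m) ℝ)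
    (hMetzler : ∀ p q : Fin n, p ≠ q → 0 ≤ A p q)
    (hB : ∀ (p : Fin n) (q : Fin m), 0 ≤ B p q) :
    (∃ k : Fin n → ℝ, (∃ y : Fin n × Fin m → ℝ, (ctrb A B).mulVec y = k) ∧
        ∀ i : Fin n, 0 < k i) ↔
      ∀ i : Fin n, ∃ (j : Fin m) (d : ℕ), 1 ≤ d ∧ ExistsWalk A B j i d := by
  constructor
  · rintro ⟨k, ⟨y, hy⟩, hk⟩ i
    have hne : (ctrb A B).mulVec y i ≠ 0 := by rw [hy]; exact (hk i).ne'
    rw [Matrix.mulVec, dotProduct] at hne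
    obtain ⟨p, -, hp⟩ := Finset.exists_ne_zero_of_sum_ne_zero hne
    have hctrb : (A ^ ((p.1 : ℕ)) * B) i p.2 ≠ 0 := left_ne_zero_of_mul hp
    exact ⟨p.2, (p.1 : ℕ) + 1, Nat.succ_le_succ (Nat.zero_le _), walk_of_ne A B _ i p.2 hctrb⟩
  · intro hcon
    choose j d hd hw using hcon
    set c : ℝ := 1 + ∑ p, |A p p| with hc
    set A' : Matrix (Fin n) (Fin n) ℝ := A + c • (1 : Matrix (Fin n) (Fin n) ℝ) with hA'
    have hdiag : ∀ p : Fin n, 0 < A p p + c := by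
      intro p
      have h1 : -A p p ≤ ∑ q, |A q q| :=
        le_trans (neg_le_abs _) (Finset.single_le_sum (f := fun q => |A q q|) (fun q _ => abs_nonneg _) (Finset.mem_univ p))
      rw [hc]; linarith
    have hA'app : ∀ p q : Fin n, A' p q = A p q + if p = q then c else 0 := by
      intro p q
      rw [hA']
      simp [Matrix.add_apply, Matrix.smul_apply, Matrix.one_apply, mul_ite]
    have hA'nn : ∀ p q : Fin n, 0 ≤ A' p q := by
      intro p q
      rw [hA'app]
      by_cases h : p = q
      · subst h; simp only [if_pos rfl]; exact (hdiag p).le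
      · simp only [if_neg h, add_zero]; exact hMetzler p q h
    have hpos : ∀ p q : Fin n, A p q ≠ 0 → 0 < A' p q := by
      intro p q hne
      rw [hA'app]
      by_cases h : p = q
      · subst h; simp only [if_pos rfl]; exact hdiag p
      · simp only [if_neg h, add_zero]
        exact lt_of_le_of_ne (hMetzler p q h) (Ne.symm hne)
    have hmem : (∑ i : Fin n, fun i' => (A' ^ (d i - 1) * B) i' (j i)) ∈
        LinearMap.range (Matrix.mulVecLin (ctrb A B)) :=
      Submodule.sum_mem _ fun i _ => shift_pow_col_mem A B c (d i - 1) (j i)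
    obtain ⟨y, hy⟩ := hmem
    refine ⟨fun i' => ∑ i : Fin n, (A' ^ (d i - 1) * B) i' (j i), ⟨y, ?_⟩, ?_⟩
    · rw [← Matrix.mulVecLin_apply, hy]
      funext i'
      rw [Finset.sum_apply]
    · intro i
      refine Finset.sum_pos' (fun i0 _ => aux_nonneg A' B hA'nn hB _ _ _) ⟨i, Finset.mem_univ i, ?_⟩
      obtain ⟨e, he⟩ : ∃ e, d i = e + 1 := ⟨d i - 1, (Nat.succ_pred_eq_of_pos (hd i)).symm⟩
      have hw' : ExistsWalk A B (j i) i (e + 1) := he ▸ hw i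
      have : d i - 1 = e := by omega
      rw [this]
      exact aux_pos A A' B hA'nn hpos hB e i (j i) hw'
end
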